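/- Let X be a non-deterministic infinite exchangeable sequence of {0,1}-valued random variables, let n ≥ 2, u ∈ {2,…,n}, and let φ : {0,1}^n → ℝ be symmetric. Then for every x ∈ {0,1}^{n−1} containing exactly z zeros in total and exactly k zeros among its first n−u coordinates, E[φ(X_1,…,X_n) | (X_{u+1},…,X_{u+n−1}) = x] = Σ_{m=0}^{u} C(u,m) · φ(0^(k+m)) · P_{n−1+u}(0^(z+m)) / P_{n−1}(0^(z)). -/

import Mathlib

open MeasureTheory

namespace HoeffdingUrn

variable {Ω : Type} [MeasurableSpace Ω]

/-- `X` is an exchangeable sequence under `μ`: each `X i` is measurable and, for every `n`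
and every permutation `π` of `{0,…,n-1}`, the law of `(X_{π 0},…,X_{π (n-1)})` coincides with
the law of `(X_0,…,X_{n-1})`. -/
def Exchangeable {D : Type} [MeasurableSpace D] (X : ℕ → Ω → D) (μ : Measure Ω) : Prop :=
  (∀ i, Measurable (X i)) ∧
  ∀ (n : ℕ) (π : Equiv.Perm (Fin n)),
    Measure.map (fun ω (i : Fin n) => X ((π i : Fin n) : ℕ) ω) μ =
      Measure.map (fun ω (i : Fin n) => X (i : ℕ) ω) μ

/-- probability that the first `n` variables equal the vector `x`. -/
noncomputable def cylProb {D : Type} (X : ℕ → Ω → D) (μ : Measure Ω) {n : ℕ}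
    (x : Fin n → D) : ℝ :=
  (μ {ω | ∀ i : Fin n, X (i : ℕ) ω = x i}).toReal

/-- `X` is non-deterministic: every finite configuration has positive probability. -/
def NonDeterministic {D : Type} (X : ℕ → Ω → D) (μ : Measure Ω) : Prop :=
  ∀ n : ℕ, 1 ≤ n → ∀ x : Fin n → D, 0 < cylProb X μ x

/-- the canonical vector of `{0,1}ⁿ` (with `false` = 0) containing exactly `j` zeros. -/
def zeroVec (n j : ℕ) : Fin n → Bool := fun i => decide (j ≤ (i : ℕ))

/-- number of zeros (`false` entries) in a Boolean vector. -/
def zeroCountVec {n : ℕ} (x : Fin n → Bool) : ℕ :=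
  (Finset.univ.filter fun i => x i = false).card

/-- `P_n(0^{(j)})`: the common probability of any configuration of `(X_1,…,X_n)` with
exactly `j` zeros. -/
noncomputable def Pz (X : ℕ → Ω → Bool) (μ : Measure Ω) (n j : ℕ) : ℝ :=
  cylProb X μ (zeroVec n j)

/-- number of zeros among the first `n` variables. -/
def zeroCount (X : ℕ → Ω → Bool) (n : ℕ) (ω : Ω) : ℕ :=
  zeroCountVec (fun i : Fin n => X (i : ℕ) ω)

/-- `P^n_{n+v}(0^{(b)} ∣ 0^{(a)})`: conditional probability that `(X_1,…,X_{n+v})`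
contains exactly `b` zeros given that `(X_1,…,X_n)` contains exactly `a` zeros. -/
noncomputable def condP (X : ℕ → Ω → Bool) (μ : Measure Ω) (n v b a : ℕ) : ℝ :=
  (μ {ω | zeroCount X (n + v) ω = b ∧ zeroCount X n ω = a}).toReal /
    (μ {ω | zeroCount X n ω = a}).toReal

/-- a symmetric function of `k` variables. -/
def SymmFun {D : Type} {k : ℕ} (φ : (Fin k → D) → ℝ) : Prop :=
  ∀ (π : Equiv.Perm (Fin k)) (x : Fin k → D), φ (x ∘ π) = φ x

open Classical in
/-- the symmetric `U`-statistic with kernel `φ` of order `k`, based on `(X_1,…,X_n)`: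
`F = ∑_{1 ≤ j₁ < … < j_k ≤ n} φ(X_{j₁},…,X_{j_k})`. -/
noncomputable def Ustat {D : Type} (X : ℕ → Ω → D) (n : ℕ) {k : ℕ}
    (φ : (Fin k → D) → ℝ) : Ω → ℝ :=
  fun ω => ∑ j : Fin k → Fin n, if StrictMono j then φ (fun i => X ((j i : Fin n) : ℕ) ω) else 0

/-- complete degeneracy of the kernel `φ` of order `k`:
`E[φ(X_1,…,X_k) ∣ X_2,…,X_k] = 0` a.s. -/
def Degenerate {D : Type} [MeasurableSpace D] (X : ℕ → Ω → D) (μ : Measure Ω) {k : ℕ}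
    (φ : (Fin k → D) → ℝ) : Prop :=
  μ[(fun ω => φ (fun i => X (i : ℕ) ω)) |
      MeasurableSpace.comap (fun ω (i : Fin (k - 1)) => X ((i : ℕ) + 1) ω) inferInstance]
    =ᵐ[μ] 0

/-- `X` is Hoeffding decomposable: for every `n ≥ 2` and `1 ≤ k ≤ n`, a symmetric
`U`-statistic of order `k` based on `(X_1,…,X_n)` is orthogonal to `SU_{k-1}(X_{[n]})`
(equivalently, lies in `SH_k(X_{[n]})`) if and only if its kernel is completely degenerate. -/
def HoeffdingDecomposable {D : Type} [MeasurableSpace D] (X : ℕ → Ω → D) (μ : Measure Ω) :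
    Prop :=
  ∀ n : ℕ, 2 ≤ n → ∀ k : ℕ, 1 ≤ k → k ≤ n → ∀ φ : (Fin k → D) → ℝ, SymmFun φ →
    ((∀ ψ : (Fin (k - 1) → D) → ℝ, SymmFun ψ →
        ∫ ω, Ustat X n φ ω * Ustat X n ψ ω ∂μ = 0) ↔ Degenerate X μ φ)

/-- the symmetric Hoeffding spaces `SH_k(X_{[n]})`, `n ≥ 2`, `1 ≤ k ≤ n`, are all
non-trivial: each contains a `U`-statistic which is not a.s. zero. -/
def SHNontrivial {D : Type} (X : ℕ → Ω → D) (μ : Measure Ω) : Prop :=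
  ∀ n : ℕ, 2 ≤ n → ∀ k : ℕ, 1 ≤ k → k ≤ n →
    ∃ φ : (Fin k → D) → ℝ, SymmFun φ ∧
      (∀ ψ : (Fin (k - 1) → D) → ℝ, SymmFun ψ →
        ∫ ω, Ustat X n φ ω * Ustat X n ψ ω ∂μ = 0) ∧
      ∫ ω, (Ustat X n φ ω) ^ 2 ∂μ ≠ 0

/-- canonical symmetrization of a function of `m` variables. -/
noncomputable def symmetrize {D : Type} {m : ℕ} (f : (Fin m → D) → ℝ) : (Fin m → D) → ℝ :=
  fun x => (∑ π : Equiv.Perm (Fin m), f (x ∘ π)) / (Nat.factorial m : ℝ)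

/-- the vector `(y_1,…,y_u,x_1,…,x_{n-u})` of length `n` (for `1 ≤ u ≤ n`). -/
noncomputable def headTail {D : Type} [Nonempty D] (u n : ℕ) (y : Fin u → D)
    (x : Fin (n - 1) → D) : Fin n → D :=
  fun i =>
    if h : (i : ℕ) < u then y ⟨i, h⟩
    else if h2 : (i : ℕ) - u < n - 1 then x ⟨(i : ℕ) - u, h2⟩
    else Classical.arbitrary D

/-- `[T]^{(n-u)}_{n,n-1}`: the (version of the) conditional expectation
`E[T(X_1,…,X_n) ∣ X_{u+1},…,X_{u+n-1}]`, viewed as a function on `D^{n-1}`. -/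
noncomputable def condProj {D : Type} [Fintype D] [Nonempty D] (X : ℕ → Ω → D)
    (μ : Measure Ω) (n u : ℕ) (T : (Fin n → D) → ℝ) : (Fin (n - 1) → D) → ℝ :=
  fun x =>
    (∑ y : Fin u → D, T (headTail u n y x) * cylProb X μ (Fin.append y x)) / cylProb X μ x

/-- `X` is weakly independent: for every `n ≥ 2`, every symmetric `T : D^n → ℝ` with
`[T]^{(n-1)}_{n,n-1}(X_2,…,X_n) = 0` a.s. satisfies, for every `u = 2,…,n`,
`tilde-[T]^{(n-u)}_{n,n-1}(X_{u+1},…,X_{u+n-1}) = 0` a.s. -/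
def WeaklyIndependent {D : Type} [Fintype D] [Nonempty D] (X : ℕ → Ω → D)
    (μ : Measure Ω) : Prop :=
  ∀ n : ℕ, 2 ≤ n → ∀ T : (Fin n → D) → ℝ, SymmFun T →
    (∀ᵐ ω ∂μ, condProj X μ n 1 T (fun i : Fin (n - 1) => X ((i : ℕ) + 1) ω) = 0) →
    ∀ u : ℕ, 2 ≤ u → u ≤ n →
      ∀ᵐ ω ∂μ, symmetrize (condProj X μ n u T) (fun i : Fin (n - 1) => X (u + (i : ℕ)) ω) = 0

/-- `γ` is the de Finetti measure of the `{0,1}`-valued exchangeable sequence `X`. -/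
def IsDeFinettiMeasure (X : ℕ → Ω → Bool) (μ : Measure Ω) (γ : Measure ℝ) : Prop :=
  IsProbabilityMeasure γ ∧ γ (Set.Icc (0 : ℝ) 1)ᶜ = 0 ∧
  ∀ (n : ℕ) (x : Fin n → Bool),
    cylProb X μ x =
      ∫ θ, θ ^ (Finset.univ.filter fun i => x i = true).card *
        (1 - θ) ^ (Finset.univ.filter fun i => x i = false).card ∂γ

/-- the `n`-th moment of a measure on `[0,1] ⊆ ℝ`. -/
noncomputable def momentOf (γ : Measure ℝ) (n : ℕ) : ℝ := ∫ θ, θ ^ n ∂γ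

/-- the Beta(a,b) distribution on `[0,1]`, with density `θ^{a-1}(1-θ)^{b-1}/B(a,b)`. -/
noncomputable def betaMeasure (a b : ℝ) : Measure ℝ :=
  (volume.restrict (Set.Ioo (0 : ℝ) 1)).withDensity fun θ =>
    ENNReal.ofReal (θ ^ (a - 1) * (1 - θ) ^ (b - 1) /
      ∫ t in Set.Ioo (0 : ℝ) 1, t ^ (a - 1) * (1 - t) ^ (b - 1))

/-- the canonical completely degenerate kernel `φ_n^{(0)}` of order `n`:
`φ_n^{(0)}(0^{(k)}) = (-1)^k P_n(0^{(0)}) / P_n(0^{(k)})`. -/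
noncomputable def phi0 (X : ℕ → Ω → Bool) (μ : Measure Ω) (n : ℕ) :
    (Fin n → Bool) → ℝ :=
  fun x => (-1 : ℝ) ^ zeroCountVec x * (Pz X μ n 0 / Pz X μ n (zeroCountVec x))

/-- `f` is separately symmetric in its first `v` and last `m - v` variables. -/
def SepSymm {m : ℕ} (v : ℕ) (f : (Fin m → Bool) → ℝ) : Prop :=
  ∀ π : Equiv.Perm (Fin m), (∀ i : Fin m, (i : ℕ) < v ↔ ((π i : Fin m) : ℕ) < v) →
    ∀ x : Fin m → Bool, f (x ∘ π) = f x

/-- the canonical vector of `{0,1}^m` whose first `v` coordinates contain exactly `k`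
zeros and whose last `m - v` coordinates contain exactly `l` zeros. -/
def blockVec (m v k l : ℕ) : Fin m → Bool :=
  fun i => if (i : ℕ) < v then decide (k ≤ (i : ℕ)) else decide (l ≤ (i : ℕ) - v)

/-- `X` is an urn process in the sense of Hill, Lane and Sudderth: there are a measurable
`f : [0,1] → [0,1]` and positive integers `r`, `b` with
`P(X_{n+1} = 1 ∣ X_1,…,X_n) = f((r + X_1 + … + X_n)/(r + b + n))` a.s. for every `n ≥ 1`. -/
def IsUrnProcess (X : ℕ → Ω → Bool) (μ : Measure Ω) : Prop :=
  ∃ (f : ℝ → ℝ) (r b : ℕ), Measurable f ∧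
    Set.MapsTo f (Set.Icc (0 : ℝ) 1) (Set.Icc (0 : ℝ) 1) ∧ 0 < r ∧ 0 < b ∧
    ∀ n : ℕ, 1 ≤ n →
      (μ[(fun ω => if X n ω = true then (1 : ℝ) else 0) |
          MeasurableSpace.comap (fun ω (i : Fin n) => X (i : ℕ) ω) inferInstance]
        =ᵐ[μ] fun ω =>
          f (((r : ℝ) + ∑ i : Fin n, (if X (i : ℕ) ω = true then (1 : ℝ) else 0)) /
            ((r : ℝ) + (b : ℝ) + (n : ℝ))))

/-! Split the window event `{X_{u+i} = x_i}` according to the hidden prefix `y = (X_0,…,X_{u-1})`.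
On the piece indexed by `y`, `φ(X_0,…,X_{n-1})` is constant, equal by symmetry to
`φ(0^(k + #zeros y))`, and by exchangeability the piece has probability
`P_{u+n-1}(0^(z + #zeros y))`, while the window itself has probability `P_{n-1}(0^(z))`.
Grouping the prefixes by their number of zeros produces the binomial weights. -/

section ZeroCount

open Finset

lemma zeroCountVec_le {n : ℕ} (w : Fin n → Bool) : zeroCountVec w ≤ n :=
  (card_filter_le _ _).trans_eq (card_fin n)

lemma zeroCountVec_zeroVec {n j : ℕ} (h : j ≤ n) : zeroCountVec (zeroVec n j) = j := by
  simp [zeroCountVec, zeroVec, Fin.card_filter_val_lt, h]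

lemma zeroCountVec_append {a b : ℕ} (y : Fin a → Bool) (x : Fin b → Bool) :
    zeroCountVec (Fin.append y x) = zeroCountVec y + zeroCountVec x := by
  simp only [zeroCountVec, card_filter, Fin.sum_univ_add, Fin.append_left, Fin.append_right]

lemma zeroCountVec_take {m b : ℕ} (h : m ≤ b) (x : Fin b → Bool) :
    zeroCountVec (Fin.take m h x) = #{i : Fin b | x i = false ∧ (i : ℕ) < m} := by
  rw [zeroCountVec, ← card_map (Fin.castLEEmb h)]
  congr 1
  ext i
  simp only [mem_map, mem_filter, mem_univ, true_and, Fin.castLEEmb_apply]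
  constructor
  · rintro ⟨j, hj, rfl⟩
    exact ⟨hj, j.isLt⟩
  · rintro ⟨hi, him⟩
    exact ⟨⟨i, him⟩, hi, rfl⟩

lemma zeroCountVec_take_append {a b m : ℕ} (h : m ≤ a + b) (ha : a ≤ m)
    (y : Fin a → Bool) (x : Fin b → Bool) :
    zeroCountVec (Fin.take m h (Fin.append y x)) =
      zeroCountVec y + #{i : Fin b | x i = false ∧ (i : ℕ) < m - a} := by
  obtain ⟨m, rfl⟩ := Nat.exists_eq_add_of_le ha
  rw [Fin.take_append_right m (by omega), zeroCountVec_append, zeroCountVec_take,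
    Nat.add_sub_cancel_left]

lemma exists_perm_comp_eq_of_zeroCountVec_eq {n : ℕ} {w w' : Fin n → Bool}
    (h : zeroCountVec w = zeroCountVec w') : ∃ σ : Equiv.Perm (Fin n), w ∘ σ = w' := by
  have hfiber (c : Bool) : Fintype.card {i // w' i = c} = Fintype.card {i // w i = c} := by
    have hcompl (v : Fin n → Bool) : #{i | v i = false} + #{i | v i = true} = n := by
      simpa using card_filter_add_card_filter_not (s := univ) fun i => v i = false
    simp only [Fintype.card_subtype]
    cases c
    · exact h.symm
    · have := hcompl w
      have := hcompl w'
      unfold zeroCountVec at h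
      omega
  exact ⟨Equiv.ofFiberEquiv fun c => Fintype.equivOfCardEq (hfiber c),
    funext (Equiv.ofFiberEquiv_map _)⟩

lemma SymmFun.apply_eq_zeroVec {n : ℕ} {φ : (Fin n → Bool) → ℝ} (hφ : SymmFun φ)
    (w : Fin n → Bool) : φ w = φ (zeroVec n (zeroCountVec w)) := by
  obtain ⟨σ, hσ⟩ :=
    exists_perm_comp_eq_of_zeroCountVec_eq (zeroCountVec_zeroVec (zeroCountVec_le w))
  conv_lhs => rw [← hσ]
  exact hφ σ _

lemma sum_comp_zeroCountVec {M : Type} [AddCommMonoid M] (u : ℕ) (G : ℕ → M) :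
    ∑ y : Fin u → Bool, G (zeroCountVec y) = ∑ m ∈ range (u + 1), u.choose m • G m := by
  let e : Finset (Fin u) ≃ (Fin u → Bool) :=
    { toFun := fun s i => decide (i ∉ s)
      invFun := fun y => {i | y i = false}
      left_inv := fun s => by ext; simp
      right_inv := fun y => by funext i; cases h : y i <;> simp [h] }
  have hcard : ∀ s, zeroCountVec (e s) = s.card := fun s => by
    simp [e, zeroCountVec]
  rw [← e.sum_comp]
  simp only [hcard]
  rw [← powerset_univ, sum_powerset_apply_card, card_univ, Fintype.card_fin]

end ZeroCount

section Exchangeable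

variable {D : Type} [MeasurableSpace D] {X : ℕ → Ω → D} {μ : Measure Ω}

lemma Exchangeable.measure_preimage_perm (hX : Exchangeable X μ) {M : ℕ}
    (π : Equiv.Perm (Fin M)) {S : Set (Fin M → D)} (hS : MeasurableSet S) :
    μ ((fun ω (i : Fin M) => X (π i) ω) ⁻¹' S) =
      μ ((fun ω (i : Fin M) => X i ω) ⁻¹' S) := by
  have hmeas : ∀ f : Fin M → ℕ, Measurable fun ω (i : Fin M) => X (f i) ω :=
    fun f => measurable_pi_lambda _ fun i => hX.1 (f i)
  rw [← Measure.map_apply (hmeas _) hS, ← Measure.map_apply (hmeas _) hS, hX.2 M π]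

variable [MeasurableSingletonClass D]

lemma Exchangeable.cylProb_comp_perm (hX : Exchangeable X μ) {M : ℕ}
    (σ : Equiv.Perm (Fin M)) (w : Fin M → D) : cylProb X μ (w ∘ σ) = cylProb X μ w := by
  have hset : {ω | ∀ i : Fin M, X i ω = (w ∘ σ) i} =
      (fun ω (i : Fin M) => X (σ.symm i) ω) ⁻¹' {w} := by
    ext ω
    simp only [Set.mem_ofPred_eq, Set.mem_preimage, Set.mem_singleton_iff, funext_iff,
      Function.comp_apply]
    exact σ.forall_congr (by simp)
  rw [cylProb, hset, hX.measure_preimage_perm σ.symm (measurableSet_singleton w), cylProb]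
  simp only [Set.preimage, Set.mem_singleton_iff, funext_iff]

lemma Exchangeable.measure_shift (hX : Exchangeable X μ) (s : ℕ) {N : ℕ} (w : Fin N → D) :
    μ {ω | ∀ i : Fin N, X (s + i) ω = w i} = μ {ω | ∀ i : Fin N, X i ω = w i} := by
  -- `π` maps the first `N` indices onto `s, …, s + N - 1`.
  let π : Equiv.Perm (Fin (N + s)) := finAddFlip.trans (finCongr (Nat.add_comm s N))
  have hS : MeasurableSet {v : Fin (N + s) → D | ∀ i, v (Fin.castAdd s i) = w i} := by
    simp only [Set.ofPred_forall]
    exact .iInter fun i => measurable_pi_apply _ (measurableSet_singleton _)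
  convert hX.measure_preimage_perm π hS using 2 <;> ext ω <;> simp [π]

end Exchangeable

lemma Exchangeable.cylProb_eq_Pz {X : ℕ → Ω → Bool} {μ : Measure Ω}
    (hX : Exchangeable X μ) {M : ℕ} (w : Fin M → Bool) :
    cylProb X μ w = Pz X μ M (zeroCountVec w) := by
  obtain ⟨σ, hσ⟩ :=
    exists_perm_comp_eq_of_zeroCountVec_eq (zeroCountVec_zeroVec (zeroCountVec_le w))
  conv_lhs => rw [← hσ]
  exact hX.cylProb_comp_perm σ _

lemma setIntegral_window_eq_sum {D : Type} [Fintype D] [MeasurableSpace D]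
    [MeasurableSingletonClass D] {X : ℕ → Ω → D} (hX : ∀ i, Measurable (X i))
    (μ : Measure Ω) [IsFiniteMeasure μ] {a b : ℕ} (x : Fin b → D)
    (F : (Fin (a + b) → D) → ℝ) :
    ∫ ω in {ω | ∀ i : Fin b, X (a + i) ω = x i}, F (fun i => X i ω) ∂μ =
      ∑ y : Fin a → D, F (Fin.append y x) * cylProb X μ (Fin.append y x) := by
  classical
  set V : Ω → Fin (a + b) → D := fun ω i => X i ω
  have hV : Measurable V := measurable_pi_lambda _ fun i => hX i
  let S : Finset (Fin (a + b) → D) := Finset.univ.image fun y => Fin.append y x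
  have hwindow : {ω | ∀ i : Fin b, X (a + i) ω = x i} = V ⁻¹' S := by
    ext ω
    simp only [Set.mem_ofPred_eq, Set.mem_preimage, Finset.coe_image, Finset.coe_univ,
      Set.image_univ, Set.mem_range, S]
    constructor
    · intro hω
      refine ⟨fun i => X i ω, funext fun i => Fin.addCases (fun j => ?_) (fun j => ?_) i⟩
      · simp [V]
      · simp [V, hω]
    · rintro ⟨y, hy⟩ i
      simpa [V] using (congrFun hy (Fin.natAdd a i)).symm
  have happend_inj : Function.Injective fun y : Fin a → D => Fin.append y x := fun y y' h => by
    funext i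
    simpa using congrFun h (Fin.castAdd b i)
  rw [hwindow, ← setIntegral_map S.measurableSet .of_discrete hV.aemeasurable,
    setIntegral_finset _ Integrable.of_finite.integrableOn,
    Finset.sum_image fun y _ y' _ h => happend_inj h]
  refine Finset.sum_congr rfl fun y _ => ?_
  rw [smul_eq_mul, mul_comm, map_measureReal_apply hV (measurableSet_singleton _)]
  simp only [Measure.real, cylProb, Set.preimage, Set.mem_singleton_iff, funext_iff, V]

theorem condExp_window_formula_general
    {Ω : Type} [MeasurableSpace Ω] (μ : Measure Ω) [IsProbabilityMeasure μ]
    (X : ℕ → Ω → Bool) (hexch : Exchangeable X μ)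
    (n u : ℕ) (hu1 : 2 ≤ u) (hu2 : u ≤ n)
    (φ : (Fin n → Bool) → ℝ) (hφ : SymmFun φ)
    (z k : ℕ) (x : Fin (n - 1) → Bool) (hxz : zeroCountVec x = z)
    (hxk : (Finset.univ.filter fun i : Fin (n - 1) => x i = false ∧ (i : ℕ) < n - u).card = k) :
    (∫ ω in {ω | ∀ i : Fin (n - 1), X (u + (i : ℕ)) ω = x i},
        φ (fun i : Fin n => X (i : ℕ) ω) ∂μ) /
        (μ {ω | ∀ i : Fin (n - 1), X (u + (i : ℕ)) ω = x i}).toReal =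
      ∑ m ∈ Finset.range (u + 1),
        (u.choose m : ℝ) * φ (zeroVec n (k + m)) *
          Pz X μ (n - 1 + u) (z + m) / Pz X μ (n - 1) z := by
  have hn : n ≤ u + (n - 1) := by omega
  have hden :
      (μ {ω | ∀ i : Fin (n - 1), X (u + (i : ℕ)) ω = x i}).toReal = Pz X μ (n - 1) z := by
    rw [hexch.measure_shift, ← hxz]
    exact hexch.cylProb_eq_Pz x
  have hterm (y : Fin u → Bool) :
      φ (Fin.take n hn (Fin.append y x)) * cylProb X μ (Fin.append y x) =
        φ (zeroVec n (k + zeroCountVec y)) * Pz X μ (n - 1 + u) (z + zeroCountVec y) := by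
    rw [hφ.apply_eq_zeroVec, zeroCountVec_take_append hn (by omega), hxk, hexch.cylProb_eq_Pz,
      zeroCountVec_append, hxz, add_comm u, add_comm k, add_comm z]
  have hnum : ∫ ω in {ω | ∀ i : Fin (n - 1), X (u + (i : ℕ)) ω = x i},
      φ (fun i : Fin n => X (i : ℕ) ω) ∂μ =
        ∑ y : Fin u → Bool,
          φ (zeroVec n (k + zeroCountVec y)) * Pz X μ (n - 1 + u) (z + zeroCountVec y) :=
    (setIntegral_window_eq_sum hexch.1 μ x fun v => φ (Fin.take n hn v)).trans
      (Finset.sum_congr rfl fun y _ => hterm y)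
  rw [hnum, hden,
    sum_comp_zeroCountVec u fun m => φ (zeroVec n (k + m)) * Pz X μ (n - 1 + u) (z + m),
    Finset.sum_div]
  refine Finset.sum_congr rfl fun m _ => ?_
  rw [nsmul_eq_mul]
  ring

/-- formula (14). For a non-deterministic infinite exchangeable
`{0,1}`-valued sequence, `n ≥ 2`, `2 ≤ u ≤ n` and symmetric `φ : {0,1}^n → ℝ`: for every
`x ∈ {0,1}^{n-1}` with exactly `z` zeros in total and exactly `k` zeros among its first
`n - u` coordinates,
`E[φ(X_1,…,X_n) ∣ (X_{u+1},…,X_{u+n-1}) = x]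
  = ∑_{m=0}^{u} C(u,m) φ(0^{(k+m)}) P_{n-1+u}(0^{(z+m)}) / P_{n-1}(0^{(z)})`. -/
theorem condExp_window_formula
    {Ω : Type} [MeasurableSpace Ω] (μ : Measure Ω) [IsProbabilityMeasure μ]
    (X : ℕ → Ω → Bool) (hexch : Exchangeable X μ) (hnd : NonDeterministic X μ)
    (n u : ℕ) (hn : 2 ≤ n) (hu1 : 2 ≤ u) (hu2 : u ≤ n)
    (φ : (Fin n → Bool) → ℝ) (hφ : SymmFun φ)
    (z k : ℕ) (x : Fin (n - 1) → Bool) (hxz : zeroCountVec x = z)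
    (hxk : (Finset.univ.filter fun i : Fin (n - 1) => x i = false ∧ (i : ℕ) < n - u).card = k) :
    (∫ ω in {ω | ∀ i : Fin (n - 1), X (u + (i : ℕ)) ω = x i},
        φ (fun i : Fin n => X (i : ℕ) ω) ∂μ) /
        (μ {ω | ∀ i : Fin (n - 1), X (u + (i : ℕ)) ω = x i}).toReal =
      ∑ m ∈ Finset.range (u + 1),
        (u.choose m : ℝ) * φ (zeroVec n (k + m)) *
          Pz X μ (n - 1 + u) (z + m) / Pz X μ (n - 1) z :=
  condExp_window_formula_general μ X hexch n u hu1 hu2 φ hφ z k x hxz hxk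

end HoeffdingUrn
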